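/- Let n ≥ 2, 2 ≤ m ≤ n, and let Λ = ∑_{i=1}^{n+1} Λ_i e_i ∈ ℝ^{n+1} satisfy ⟨Λ, α⟩ ≠ 0 for all α ∈ Δ, ⟨Λ, α⟩ > 0 for all α ∈ Δ_c^+, and ⟨Λ, β⟩ > 0 for all β ∈ Δ_{m,+}^+ (resp. for all β ∈ Δ_{m,−}^+). Define Λ* := ∑_{i=1}^{n−1} Λ_i e_i + (−1)^n Λ_n e_n − Λ_{n+1} e_{n+1}. Then Λ* satisfies ⟨Λ*, α⟩ ≠ 0 for all α ∈ Δ, ⟨Λ*, α⟩ > 0 for all α ∈ Δ_c^+, and ⟨Λ*, β⟩ > 0 for all β ∈ Δ_{m,−}^+ (resp. for all β ∈ Δ_{m,+}^+). -/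
import Mathlib


/-- The standard basis vector `e_i` of `ℝ^{n+1}` (indices `0,…,n` correspond to `1,…,n+1`). -/
def ee (n : ℕ) (i : Fin (n + 1)) : Fin (n + 1) → ℝ := Pi.single i 1

/-- The standard inner product on `ℝ^{n+1}`. -/
def inn (n : ℕ) (v w : Fin (n + 1) → ℝ) : ℝ := ∑ i, v i * w i

/-- `Δ = {±e_i ± e_j : 1 ≤ i < j ≤ n+1}`. -/
def Delta (n : ℕ) : Set (Fin (n + 1) → ℝ) :=
  {v | ∃ i j : Fin (n + 1), i < j ∧
    (v = ee n i + ee n j ∨ v = ee n i - ee n j ∨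
     v = -ee n i + ee n j ∨ v = -ee n i - ee n j)}

/-- `Δ_c⁺ = {e_i − e_j, e_i + e_j : 1 ≤ i < j ≤ n}`. -/
def DeltaC (n : ℕ) : Set (Fin (n + 1) → ℝ) :=
  {v | ∃ i j : Fin (n + 1), i < j ∧ (j : ℕ) < n ∧
    (v = ee n i - ee n j ∨ v = ee n i + ee n j)}

/-- `Δ_{m,+}⁺` for `1 ≤ m ≤ n+1`. -/
def DeltaP (n m : ℕ) : Set (Fin (n + 1) → ℝ) :=
  DeltaC n ∪
  {v | ∃ i : Fin (n + 1), (i : ℕ) + 2 ≤ m ∧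
    (v = ee n i + ee n (Fin.last n) ∨ v = ee n i - ee n (Fin.last n))} ∪
  {v | ∃ i : Fin (n + 1), m ≤ (i : ℕ) + 1 ∧ (i : ℕ) < n ∧
    (v = ee n (Fin.last n) + ee n i ∨ v = ee n (Fin.last n) - ee n i)}

/-- `Δ_{m,−}⁺` for `1 ≤ m ≤ n`. -/
def DeltaM (n m : ℕ) : Set (Fin (n + 1) → ℝ) :=
  DeltaC n ∪
  {v | ∃ i : Fin (n + 1), (i : ℕ) + 2 ≤ m ∧
    (v = ee n i + ee n (Fin.last n) ∨ v = ee n i - ee n (Fin.last n))} ∪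
  {v | ∃ i : Fin (n + 1), m ≤ (i : ℕ) + 1 ∧ (i : ℕ) < n ∧
    (v = -ee n (Fin.last n) + ee n i ∨ v = -ee n (Fin.last n) - ee n i)}

/-- `Λ* := ∑_{i=1}^{n−1} Λ_i e_i + (−1)^n Λ_n e_n − Λ_{n+1} e_{n+1}`. -/
def lamStar (n : ℕ) (Lam : Fin (n + 1) → ℝ) : Fin (n + 1) → ℝ :=
  fun a => if (a : ℕ) + 1 < n then Lam a
    else if (a : ℕ) + 1 = n then (-1 : ℝ) ^ n * Lam a
    else -Lam a


lemma inn_ee (n : ℕ) (v : Fin (n + 1) → ℝ) (i : Fin (n + 1)) :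
    inn n v (ee n i) = v i := by
  simp [inn, ee, Pi.single_apply]

lemma inn_add (n : ℕ) (v w u : Fin (n + 1) → ℝ) :
    inn n v (w + u) = inn n v w + inn n v u := by
  simp [inn, mul_add, Finset.sum_add_distrib]

lemma inn_neg (n : ℕ) (v w : Fin (n + 1) → ℝ) :
    inn n v (-w) = -inn n v w := by
  simp [inn, mul_neg]

lemma inn_sub (n : ℕ) (v w u : Fin (n + 1) → ℝ) :
    inn n v (w - u) = inn n v w - inn n v u := by
  simp [sub_eq_add_neg, inn_add, inn_neg]

lemma star_lo (n : ℕ) (Lam : Fin (n + 1) → ℝ) (a : Fin (n + 1)) (h : (a : ℕ) + 1 < n) :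
    lamStar n Lam a = Lam a := if_pos h

lemma star_last (n : ℕ) (Lam : Fin (n + 1) → ℝ) :
    lamStar n Lam (Fin.last n) = -Lam (Fin.last n) := by
  show (if _ then _ else _) = _
  rw [if_neg (by simp), if_neg (by simp)]

lemma star_sign (n : ℕ) (Lam : Fin (n + 1) → ℝ) (a : Fin (n + 1)) :
    lamStar n Lam a = Lam a ∨ lamStar n Lam a = -Lam a := by
  unfold lamStar
  split_ifs with h1 h2
  · exact Or.inl rfl
  · rcases Nat.even_or_odd n with h | h
    · rw [h.neg_one_pow]; exact Or.inl (one_mul _)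
    · rw [h.neg_one_pow]; exact Or.inr (neg_one_mul _)
  · exact Or.inr rfl

/-- **Remark 3.2 of the paper** (Harish-Chandra parameter of the contragredient):
if `Λ` is `Δ`-regular, `Δ_c⁺`-dominant and dominant for `Δ_{m,+}⁺` (resp. `Δ_{m,−}⁺`),
then `Λ*` is `Δ`-regular, `Δ_c⁺`-dominant and dominant for `Δ_{m,−}⁺` (resp. `Δ_{m,+}⁺`). -/
theorem stmt8 (n m : ℕ) (hn : 2 ≤ n) (hm1 : 2 ≤ m) (hm2 : m ≤ n)
    (Lam : Fin (n + 1) → ℝ)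
    (hreg : ∀ α ∈ Delta n, inn n Lam α ≠ 0)
    (hdom : ∀ α ∈ DeltaC n, 0 < inn n Lam α) :
    (∀ α ∈ Delta n, inn n (lamStar n Lam) α ≠ 0) ∧
    (∀ α ∈ DeltaC n, 0 < inn n (lamStar n Lam) α) ∧
    ((∀ β ∈ DeltaP n m, 0 < inn n Lam β) →
      ∀ β ∈ DeltaM n m, 0 < inn n (lamStar n Lam) β) ∧
    ((∀ β ∈ DeltaM n m, 0 < inn n Lam β) →
      ∀ β ∈ DeltaP n m, 0 < inn n (lamStar n Lam) β) := by
  have P1 : ∀ α ∈ Delta n, inn n (lamStar n Lam) α ≠ 0 := by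
    rintro α ⟨i, j, hij, hcase⟩
    have h1 : Lam i + Lam j ≠ 0 := by
      have := hreg (ee n i + ee n j) ⟨i, j, hij, Or.inl rfl⟩
      simpa [inn_add, inn_ee] using this
    have h2 : Lam i - Lam j ≠ 0 := by
      have := hreg (ee n i - ee n j) ⟨i, j, hij, Or.inr (Or.inl rfl)⟩
      simpa [inn_sub, inn_ee] using this
    rcases star_sign n Lam i with ei | ei <;> rcases star_sign n Lam j with ej | ej <;>
      rcases hcase with rfl | rfl | rfl | rfl <;>
      simp only [inn_add, inn_sub, inn_neg, inn_ee, ei, ej] <;>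
      intro h <;> first | (apply h1; linarith) | (apply h2; linarith)
  have P2 : ∀ α ∈ DeltaC n, 0 < inn n (lamStar n Lam) α := by
    rintro α ⟨i, j, hij, hjn, hcase⟩
    have hij' : (i : ℕ) < (j : ℕ) := hij
    have d1 : 0 < Lam i - Lam j := by
      have := hdom (ee n i - ee n j) ⟨i, j, hij, hjn, Or.inl rfl⟩
      simpa [inn_sub, inn_ee] using this
    have d2 : 0 < Lam i + Lam j := by
      have := hdom (ee n i + ee n j) ⟨i, j, hij, hjn, Or.inr rfl⟩
      simpa [inn_add, inn_ee] using this
    have ei : lamStar n Lam i = Lam i := star_lo n Lam i (by omega)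
    rcases star_sign n Lam j with ej | ej <;>
      rcases hcase with rfl | rfl <;>
      simp only [inn_add, inn_sub, inn_ee, ei, ej] <;> linarith
  refine ⟨P1, P2, ?_, ?_⟩
  · intro hP β hβ
    rcases hβ with (hc | ⟨i, him, hcase⟩) | ⟨i, hmi, hin, hcase⟩
    · exact P2 β hc
    · have ei : lamStar n Lam i = Lam i := star_lo n Lam i (by omega)
      have d1 : 0 < Lam i + Lam (Fin.last n) := by
        have := hP (ee n i + ee n (Fin.last n))
          (Or.inl (Or.inr ⟨i, him, Or.inl rfl⟩))
        simpa [inn_add, inn_ee] using this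
      have d2 : 0 < Lam i - Lam (Fin.last n) := by
        have := hP (ee n i - ee n (Fin.last n))
          (Or.inl (Or.inr ⟨i, him, Or.inr rfl⟩))
        simpa [inn_sub, inn_ee] using this
      rcases hcase with rfl | rfl <;>
        simp only [inn_add, inn_sub, inn_ee, ei, star_last] <;> linarith
    · have d1 : 0 < Lam (Fin.last n) + Lam i := by
        have := hP (ee n (Fin.last n) + ee n i)
          (Or.inr ⟨i, hmi, hin, Or.inl rfl⟩)
        simpa [inn_add, inn_ee] using this
      have d2 : 0 < Lam (Fin.last n) - Lam i := by
        have := hP (ee n (Fin.last n) - ee n i)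
          (Or.inr ⟨i, hmi, hin, Or.inr rfl⟩)
        simpa [inn_sub, inn_ee] using this
      rcases star_sign n Lam i with ei | ei <;>
        rcases hcase with rfl | rfl <;>
        simp only [inn_add, inn_sub, inn_neg, inn_ee, ei, star_last] <;> linarith
  · intro hM β hβ
    rcases hβ with (hc | ⟨i, him, hcase⟩) | ⟨i, hmi, hin, hcase⟩
    · exact P2 β hc
    · have ei : lamStar n Lam i = Lam i := star_lo n Lam i (by omega)
      have d1 : 0 < Lam i + Lam (Fin.last n) := by
        have := hM (ee n i + ee n (Fin.last n))
          (Or.inl (Or.inr ⟨i, him, Or.inl rfl⟩))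
        simpa [inn_add, inn_ee] using this
      have d2 : 0 < Lam i - Lam (Fin.last n) := by
        have := hM (ee n i - ee n (Fin.last n))
          (Or.inl (Or.inr ⟨i, him, Or.inr rfl⟩))
        simpa [inn_sub, inn_ee] using this
      rcases hcase with rfl | rfl <;>
        simp only [inn_add, inn_sub, inn_ee, ei, star_last] <;> linarith
    · have d1 : 0 < -Lam (Fin.last n) + Lam i := by
        have := hM (-ee n (Fin.last n) + ee n i)
          (Or.inr ⟨i, hmi, hin, Or.inl rfl⟩)
        simpa [inn_add, inn_neg, inn_ee] using this
      have d2 : 0 < -Lam (Fin.last n) - Lam i := by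
        have := hM (-ee n (Fin.last n) - ee n i)
          (Or.inr ⟨i, hmi, hin, Or.inr rfl⟩)
        simpa [inn_sub, inn_neg, inn_ee] using this
      rcases star_sign n Lam i with ei | ei <;>
        rcases hcase with rfl | rfl <;>
        simp only [inn_add, inn_sub, inn_ee, ei, star_last] <;> linarith
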